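/- arXiv:2312.05423 — 2 statements merged into one kernel-verified Lean document; each statement's English description precedes it below -/
import Mathlib

section
/- Let α > 0 and let x ∈ ℝ with |x| ≤ α. Then (1/(2α)) · ∫_{−α}^{α} | x − α·sgn(x − t) | dt = α − x²/α. -/
/-- The sign function: `+1` if `t ≥ 0` and `-1` if `t < 0`. -/
noncomputable def sgn (t : ℝ) : ℝ := if 0 ≤ t then 1 else -1

open intervalIntegral

theorem integral_ite_le {l c u : ℝ} (hlc : l ≤ c) (hcu : c ≤ u) (a b : ℝ) :
    ∫ t in l..u, (if t ≤ c then a else b) = a * (c - l) + b * (u - c) := by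
  have left_eq : Set.EqOn (fun t => if t ≤ c then a else b) (fun _ => a) (Set.uIoc l c) := by
    intro t ht
    rw [Set.uIoc_of_le hlc] at ht
    simp [ht.2]
  have right_eq : Set.EqOn (fun t => if t ≤ c then a else b) (fun _ => b) (Set.uIoc c u) := by
    intro t ht
    rw [Set.uIoc_of_le hcu] at ht
    simp [not_le.mpr ht.1]
  rw [← integral_add_adjacent_intervals
      ((intervalIntegrable_const (c := a)).congr left_eq.symm)
      ((intervalIntegrable_const (c := b)).congr right_eq.symm),
    integral_congr_ae (MeasureTheory.ae_of_all _ fun t ht => left_eq ht),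
    integral_congr_ae (MeasureTheory.ae_of_all _ fun t ht => right_eq ht),
    integral_const, integral_const, smul_eq_mul, smul_eq_mul]
  ring

theorem abs_sub_mul_sgn_sub {α x : ℝ} (hx : |x| ≤ α) (t : ℝ) :
    |x - α * sgn (x - t)| = if t ≤ x then α - x else α + x := by
  obtain ⟨hαx, hxα⟩ := abs_le.mp hx
  unfold sgn
  split_ifs with hxt hle hle
  · rw [mul_one, abs_of_nonpos (by linarith)]
    ring
  · linarith
  · linarith
  · rw [mul_neg_one, sub_neg_eq_add, abs_of_nonneg (by linarith), add_comm]

/-- Dither-expectation computation (equation (22) in the paper):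
if `|x| ≤ α`, then `(1/(2α)) ∫_{-α}^{α} |x - α·sgn(x - t)| dt = α - x²/α`. -/
theorem dither_expectation (α x : ℝ) (hα : 0 < α) (hx : |x| ≤ α) :
    (1 / (2 * α)) * (∫ t in (-α)..α, |x - α * sgn (x - t)|) = α - x ^ 2 / α := by
  obtain ⟨hαx, hxα⟩ := abs_le.mp hx
  simp_rw [abs_sub_mul_sgn_sub hx]
  rw [integral_ite_le hαx hxα]
  field_simp
  ring
end

section
/- Let n₁, n₂, m′ be positive integers, α > 0, ε > 0, and let X ∈ ℝ^{n₁×n₂} be a fixed matrix with ‖X‖_max ≤ α. Let (i₁,j₁), …, (i_{m′}, j_{m′}) be i.i.d. indices uniform on {1,…,n₁}×{1,…,n₂} and τ₁, …, τ_{m′} i.i.d. uniform on [−α, α], all mutually independent. Set T_ave(X) = (1/m′) · Σ_{k=1}^{m′} |X_{i_k,j_k} − α·sgn(X_{i_k,j_k} − τ_k)|. Then Pr( | T_ave(X) − α + ‖X‖_F² / (α n₁ n₂) | ≥ ε ) ≤ 2·exp(−ε² m′ / (2α²)). -/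
/-
For `|x| ≤ α` the one-bit error is `|x - α sgn(x - t)| = α - x sgn(x - t) ∈ [0, 2α]`, and averaging
over the uniform dither `t ∈ [-α, α]` gives `α - x² / α`; averaging further over the uniform index
gives the mean `α - ‖X‖_F² / (α n₁ n₂)`. The errors of the `m'` samples are independent because
the index–dither pairs are, so the two-sided Hoeffding inequality for variables with range `2α`
gives the bound.
-/

open MeasureTheory ProbabilityTheory

/-- Frobenius norm of a real matrix. -/
noncomputable def frobR {n₁ n₂ : ℕ} (A : Matrix (Fin n₁) (Fin n₂) ℝ) : ℝ :=
  Real.sqrt (∑ i, ∑ j, (A i j) ^ 2)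

open scoped NNReal

namespace ProbabilityTheory

lemma HasSubgaussianMGF.measureReal_abs_ge_le {Ω : Type*} [MeasurableSpace Ω] {μ : Measure Ω}
    {X : Ω → ℝ} {c : ℝ≥0} (h : HasSubgaussianMGF X c μ) {ε : ℝ} (hε : 0 ≤ ε) :
    μ.real {ω | ε ≤ |X ω|} ≤ 2 * Real.exp (-ε ^ 2 / (2 * c)) := by
  have hsplit : {ω | ε ≤ |X ω|} = {ω | ε ≤ X ω} ∪ {ω | ε ≤ (-X) ω} := by
    ext ω
    simp only [Set.mem_ofPred_eq, Set.mem_union, Pi.neg_apply, le_abs']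
    constructor <;> rintro (h | h) <;> [right; left; right; left] <;> linarith
  calc μ.real {ω | ε ≤ |X ω|}
      ≤ μ.real {ω | ε ≤ X ω} + μ.real {ω | ε ≤ (-X) ω} := hsplit ▸ measureReal_union_le _ _
    _ ≤ Real.exp (-ε ^ 2 / (2 * c)) + Real.exp (-ε ^ 2 / (2 * c)) :=
        add_le_add (h.measure_ge_le hε) (h.neg.measure_ge_le hε)
    _ = 2 * Real.exp (-ε ^ 2 / (2 * c)) := by ring

theorem measureReal_abs_average_sub_ge_le {Ω ι : Type*} [MeasurableSpace Ω] {μ : Measure Ω}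
    [IsProbabilityMeasure μ] [Fintype ι] [Nonempty ι] {Y : ι → Ω → ℝ}
    (hindep : iIndepFun Y μ) (hmeas : ∀ i, Measurable (Y i)) {a b m : ℝ}
    (hY : ∀ i, ∀ᵐ ω ∂μ, Y i ω ∈ Set.Icc a b) (hmean : ∀ i, μ[Y i] = m) {ε : ℝ} (hε : 0 ≤ ε) :
    μ.real {ω | ε ≤ |(∑ i, Y i ω) / Fintype.card ι - m|}
      ≤ 2 * Real.exp (-(2 * Fintype.card ι * ε ^ 2) / (b - a) ^ 2) := by
  set n : ℝ := (Fintype.card ι : ℝ)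
  have hn : 0 < n := Nat.cast_pos.mpr Fintype.card_pos
  have hsubG : ∀ i, HasSubgaussianMGF (fun ω ↦ Y i ω - m) ((‖b - a‖₊ / 2) ^ 2) μ := fun i ↦
    hmean i ▸ hasSubgaussianMGF_of_mem_Icc (hmeas i).aemeasurable (hY i)
  have hsum := HasSubgaussianMGF.sum_of_iIndepFun
    (hindep.comp (fun _ y ↦ y - m) (fun _ ↦ measurable_sub_const m)) (s := Finset.univ)
    (fun i _ ↦ hsubG i)
  have hevent : {ω | ε ≤ |(∑ i, Y i ω) / n - m|} = {ω | n * ε ≤ |∑ i, (Y i ω - m)|} := by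
    ext ω
    rw [Set.mem_ofPred_eq, Set.mem_ofPred_eq, Finset.sum_sub_distrib, Finset.sum_const,
      Finset.card_univ, nsmul_eq_mul, ← mul_le_mul_iff_right₀ hn, ← abs_of_pos hn, ← abs_mul,
      abs_of_pos hn, mul_sub, mul_div_cancel₀ _ hn.ne']
  have hparam : (((∑ _i : ι, (‖b - a‖₊ / 2) ^ 2 : ℝ≥0)) : ℝ) = n * ((b - a) / 2) ^ 2 := by
    simp [n, div_pow]
  rw [hevent]
  refine (hsum.measureReal_abs_ge_le (by positivity)).trans_eq ?_
  rw [hparam]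
  rcases eq_or_ne (b - a) 0 with hab | hab
  · simp [hab]
  · field_simp

universe u

lemma iIndepFun.prodMk_of_sum {Ω ι : Type*} [MeasurableSpace Ω] {μ : Measure Ω}
    {β γ : Type u} [mβ : MeasurableSpace β] [mγ : MeasurableSpace γ]
    {X : ι → Ω → β} {Y : ι → Ω → γ} (hX : ∀ i, Measurable (X i)) (hY : ∀ i, Measurable (Y i))
    (h : iIndepFun (β := fun s : ι ⊕ ι => Sum.elim (fun _ => β) (fun _ => γ) s)
      (m := fun s => Sum.casesOn s (fun _ => mβ) (fun _ => mγ))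
      (fun s => Sum.casesOn s X Y) μ) :
    iIndepFun (fun i ω => (X i ω, Y i ω)) μ := by
  classical
  let rectangles : ι → Set (Set Ω) := fun i =>
    Set.image2 (fun A B => X i ⁻¹' A ∩ Y i ⁻¹' B) {A | MeasurableSet A} {B | MeasurableSet B}
  rw [iIndepFun_iff_iIndep]
  refine iIndepSets.iIndep (fun i => ((hX i).prodMk (hY i)).comap_le) rectangles
    (fun i => ?_) (fun i => ?_) ?_
  · rintro - ⟨A, hA, B, hB, rfl⟩ - ⟨A', hA', B', hB', rfl⟩ -
    refine ⟨A ∩ A', hA.inter hA', B ∩ B', hB.inter hB', ?_⟩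
    ext ω
    simp only [Set.preimage_inter, Set.mem_inter_iff, Set.mem_preimage]
    tauto
  · rw [← generateFrom_prod, MeasurableSpace.comap_generateFrom, Set.image_image2]
    rfl
  · rw [iIndepSets_iff]
    intro S sets hsets
    choose! A hA B hB hsets using hsets
    have hpair : ∀ i ∈ S, μ (sets i) = μ (X i ⁻¹' A i) * μ (Y i ⁻¹' B i) := fun i hi => by
      rw [← hsets i hi]
      exact (h.indepFun (i := .inl i) (j := .inr i) (by simp)).measure_inter_preimage_eq_mul
        _ _ (hA i hi) (hB i hi)
    let g : ι ⊕ ι → Set Ω := Sum.elim (fun i => X i ⁻¹' A i) (fun i => Y i ⁻¹' B i)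
    have hinter : ⋂ i ∈ S, sets i = ⋂ s ∈ S.disjSum S, g s := by
      ext ω
      simp only [Set.mem_iInter, Sum.forall, Finset.inl_mem_disjSum, Finset.inr_mem_disjSum, g,
        Sum.elim_inl, Sum.elim_inr, ← forall₂_and]
      refine forall₂_congr fun i hi => ?_
      rw [← hsets i hi]
      rfl
    rw [hinter, h.meas_biInter ?_, Finset.prod_disjSum, Finset.prod_congr rfl hpair,
      Finset.prod_mul_distrib]
    · rfl
    · rintro (i | i) hi
      · exact ⟨A i, hA i (Finset.inl_mem_disjSum.mp hi), rfl⟩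
      · exact ⟨B i, hB i (Finset.inr_mem_disjSum.mp hi), rfl⟩

lemma IndepFun.integral_comp_prodMk {Ω α β E : Type*} [MeasurableSpace Ω]
    {μ : Measure Ω} [IsFiniteMeasure μ] [MeasurableSpace α] [MeasurableSpace β]
    [NormedAddCommGroup E] [NormedSpace ℝ E] {I : Ω → α} {T : Ω → β}
    (hIT : IndepFun I T μ) (hI : Measurable I) (hT : Measurable T) {g : α × β → E}
    (hg : Integrable g ((μ.map I).prod (μ.map T))) :
    ∫ ω, g (I ω, T ω) ∂μ = ∫ ω, ∫ t, g (I ω, t) ∂(μ.map T) ∂μ := by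
  have hjoint : μ.map (fun ω => (I ω, T ω)) = (μ.map I).prod (μ.map T) :=
    (indepFun_iff_map_prod_eq_prod_map_map hI.aemeasurable hT.aemeasurable).mp hIT
  rw [← integral_map (hI.prodMk hT).aemeasurable (hjoint ▸ hg.aestronglyMeasurable), hjoint,
    integral_prod g hg, integral_map hI.aemeasurable hg.integral_prod_left.aestronglyMeasurable]

end ProbabilityTheory

lemma integral_comp_of_measure_preimage_singleton {Ω ι : Type*} [MeasurableSpace Ω]
    {μ : Measure Ω} [IsFiniteMeasure μ] [Fintype ι] [MeasurableSpace ι]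
    [MeasurableSingletonClass ι] {I : Ω → ι} (hI : Measurable I) {c : ENNReal}
    (hc : ∀ p, μ (I ⁻¹' {p}) = c) (f : ι → ℝ) :
    ∫ ω, f (I ω) ∂μ = c.toReal * ∑ p, f p := by
  rw [← integral_map hI.aemeasurable (measurable_of_finite f).aestronglyMeasurable,
    integral_fintype .of_finite, Finset.mul_sum]
  refine Finset.sum_congr rfl fun p _ => ?_
  rw [measureReal_def, Measure.map_apply hI (measurableSet_singleton p), hc, smul_eq_mul]

lemma measurable_sgn : Measurable sgn :=
  Measurable.ite measurableSet_Ici measurable_const measurable_const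

lemma abs_sub_mul_sgn {α x : ℝ} (hx : |x| ≤ α) (s : ℝ) : |x - α * sgn s| = α - x * sgn s := by
  rw [abs_le] at hx
  unfold sgn
  split_ifs
  · rw [abs_of_nonpos (by linarith)]; ring
  · rw [abs_of_nonneg (by linarith)]; ring

lemma abs_sub_mul_sgn_le {α x : ℝ} (hx : |x| ≤ α) (s : ℝ) : |x - α * sgn s| ≤ 2 * α := by
  rw [abs_sub_mul_sgn hx]
  have := abs_le.mp hx
  unfold sgn
  split_ifs <;> linarith

lemma measurable_abs_sub_mul_sgn_comp {ι : Type*} [MeasurableSpace ι] {α : ℝ} {x : ι → ℝ}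
    (hx : Measurable x) : Measurable fun q : ι × ℝ => |x q.1 - α * sgn (x q.1 - q.2)| :=
  have hxq : Measurable fun q : ι × ℝ => x q.1 := hx.comp measurable_fst
  (hxq.sub ((measurable_sgn.comp (hxq.sub measurable_snd)).const_mul α)).abs

lemma setIntegral_sgn_sub {α x : ℝ} (hx : |x| ≤ α) :
    ∫ t in Set.Icc (-α) α, sgn (x - t) = 2 * x := by
  obtain ⟨hxl, hxr⟩ := abs_le.mp hx
  have hleft : Set.EqOn (fun t => sgn (x - t)) (fun _ => 1) (Set.Icc (-α) x) := fun t ht =>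
    if_pos (sub_nonneg.mpr ht.2)
  have hright : Set.EqOn (fun t => sgn (x - t)) (fun _ => -1) (Set.Ioc x α) := fun t ht =>
    if_neg (by linarith [ht.1])
  have hdisj : Disjoint (Set.Icc (-α) x) (Set.Ioc x α) :=
    Set.disjoint_left.mpr fun t h1 h2 => (h2.1.trans_le h1.2).false
  rw [← Set.Icc_union_Ioc_eq_Icc hxl hxr,
    setIntegral_union hdisj measurableSet_Ioc
      ((integrableOn_const measure_Icc_lt_top.ne).congr_fun hleft.symm measurableSet_Icc)
      ((integrableOn_const measure_Ioc_lt_top.ne).congr_fun hright.symm measurableSet_Ioc),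
    setIntegral_congr_fun measurableSet_Icc hleft, setIntegral_congr_fun measurableSet_Ioc hright]
  simp only [setIntegral_const, Real.volume_real_Icc, Real.volume_real_Ioc, smul_eq_mul]
  rw [max_eq_left (by linarith), max_eq_left (by linarith)]
  ring

lemma integral_abs_sub_mul_sgn_uniform {α x : ℝ} (hα : 0 < α) (hx : |x| ≤ α) :
    ∫ t, |x - α * sgn (x - t)| ∂(ENNReal.ofReal (1 / (2 * α)) • volume.restrict (Set.Icc (-α) α))
      = α - x ^ 2 / α := by
  have hint : IntegrableOn (fun t => sgn (x - t)) (Set.Icc (-α) α) := by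
    refine Measure.integrableOn_of_bounded (M := 1) measure_Icc_lt_top.ne
      (measurable_sgn.comp (measurable_const.sub measurable_id)).aestronglyMeasurable
      (ae_of_all _ fun t => ?_)
    unfold sgn; split_ifs <;> simp
  rw [integral_smul_measure, ENNReal.toReal_ofReal (by positivity),
    setIntegral_congr_fun measurableSet_Icc fun t _ => abs_sub_mul_sgn hx (x - t),
    integral_sub (integrable_const α) (hint.const_mul x),
    integral_const_mul, setIntegral_sgn_sub hx, setIntegral_const, Real.volume_real_Icc,
    max_eq_left (by linarith), smul_eq_mul]
  field_simp
  ring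

lemma integral_abs_sub_mul_sgn_of_indepFun {Ω ι : Type*} [MeasurableSpace Ω]
    {μ : Measure Ω} [IsProbabilityMeasure μ] [Fintype ι] [MeasurableSpace ι]
    [MeasurableSingletonClass ι] {α : ℝ} (hα : 0 < α) {x : ι → ℝ} (hx : ∀ p, |x p| ≤ α)
    {I : Ω → ι} {T : Ω → ℝ} (hI : Measurable I) (hT : Measurable T) {c : ENNReal}
    (hIunif : ∀ p, μ (I ⁻¹' {p}) = c)
    (hTunif : μ.map T = ENNReal.ofReal (1 / (2 * α)) • volume.restrict (Set.Icc (-α) α))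
    (hIT : IndepFun I T μ) :
    ∫ ω, |x (I ω) - α * sgn (x (I ω) - T ω)| ∂μ = α - c.toReal * (∑ p, x p ^ 2) / α := by
  have hg : Integrable (fun q : ι × ℝ => |x q.1 - α * sgn (x q.1 - q.2)|)
      ((μ.map I).prod (μ.map T)) := by
    refine Integrable.of_bound (C := 2 * α)
      (measurable_abs_sub_mul_sgn_comp (measurable_of_finite x)).aestronglyMeasurable
      (ae_of_all _ fun q => ?_)
    rw [Real.norm_eq_abs, abs_abs]
    exact abs_sub_mul_sgn_le (hx q.1) _
  rw [hIT.integral_comp_prodMk hI hT hg, hTunif]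
  simp_rw [integral_abs_sub_mul_sgn_uniform hα (hx _)]
  have hxI : Integrable (fun ω => x (I ω) ^ 2) μ :=
    (Integrable.of_finite (f := fun p => x p ^ 2)).comp_measurable hI
  rw [integral_sub (integrable_const α) (hxI.div_const α),
    integral_const, integral_div,
    integral_comp_of_measure_preimage_singleton hI hIunif fun p => x p ^ 2]
  simp

lemma frobR_sq {n₁ n₂ : ℕ} (A : Matrix (Fin n₁) (Fin n₂) ℝ) :
    frobR A ^ 2 = ∑ p : Fin n₁ × Fin n₂, A p.1 p.2 ^ 2 := by
  rw [frobR, Real.sq_sqrt (by positivity), Fintype.sum_prod_type]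

theorem pointwise_concentration_general (n₁ n₂ m' : ℕ)
    (hm' : 0 < m') (α ε : ℝ) (hα : 0 < α) (hε : 0 < ε)
    (X : Matrix (Fin n₁) (Fin n₂) ℝ) (hX : ∀ i j, |X i j| ≤ α)
    {Ω : Type*} [MeasureSpace Ω] [IsProbabilityMeasure (ℙ : Measure Ω)]
    (idx : Fin m' → Ω → Fin n₁ × Fin n₂) (τ : Fin m' → Ω → ℝ)
    (hidxmeas : ∀ k, Measurable (idx k)) (hτmeas : ∀ k, Measurable (τ k))
    -- each index pair is uniform on {1,…,n₁}×{1,…,n₂}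
    (hidxunif : ∀ k p, ℙ (idx k ⁻¹' {p}) = ((n₁ * n₂ : ENNReal))⁻¹)
    -- each dither is uniform on [-α, α]
    (hτunif : ∀ k, Measure.map (τ k) ℙ =
      ENNReal.ofReal (1 / (2 * α)) • (volume.restrict (Set.Icc (-α) α)))
    -- all 2m' random variables are mutually independent
    (hindep : iIndepFun
      (β := fun s : Fin m' ⊕ Fin m' => Sum.elim (fun _ => Fin n₁ × Fin n₂) (fun _ => ℝ) s)
      (m := fun s => Sum.casesOn s (fun _ => (inferInstance : MeasurableSpace (Fin n₁ × Fin n₂)))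
        (fun _ => (inferInstance : MeasurableSpace ℝ)))
      (fun s => Sum.casesOn s idx τ) ℙ) :
    ℙ {ω | ε ≤ |(1 / (m' : ℝ)) * (∑ k : Fin m',
        |X (idx k ω).1 (idx k ω).2 - α * sgn (X (idx k ω).1 (idx k ω).2 - τ k ω)|)
        - α + frobR X ^ 2 / (α * n₁ * n₂)|}
      ≤ ENNReal.ofReal (2 * Real.exp (-(ε ^ 2 * m') / (2 * α ^ 2))) := by
  let d : Fin m' → Ω → ℝ := fun k ω =>
    |X (idx k ω).1 (idx k ω).2 - α * sgn (X (idx k ω).1 (idx k ω).2 - τ k ω)|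
  have hg := measurable_abs_sub_mul_sgn_comp (α := α)
    (measurable_of_finite fun p : Fin n₁ × Fin n₂ => X p.1 p.2)
  have hd_meas : ∀ k, Measurable (d k) := fun k => hg.comp ((hidxmeas k).prodMk (hτmeas k))
  have hd_indep : iIndepFun d ℙ :=
    (hindep.prodMk_of_sum hidxmeas hτmeas).comp _ fun _ => hg
  have hd_mem : ∀ k, ∀ᵐ ω ∂ℙ, d k ω ∈ Set.Icc 0 (2 * α) := fun k =>
    ae_of_all _ fun ω => ⟨abs_nonneg _, abs_sub_mul_sgn_le (hX _ _) _⟩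
  have hd_mean : ∀ k, ℙ[d k] = α - frobR X ^ 2 / (α * n₁ * n₂) := fun k => by
    rw [integral_abs_sub_mul_sgn_of_indepFun hα (x := fun p => X p.1 p.2) (fun p => hX _ _)
      (hidxmeas k) (hτmeas k) (hidxunif k) (hτunif k)
      (hindep.indepFun (i := .inl k) (j := .inr k) (by simp)), frobR_sq]
    simp only [ENNReal.toReal_inv, ENNReal.toReal_mul, ENNReal.toReal_natCast]
    ring
  have : NeZero m' := ⟨hm'.ne'⟩
  have hhoeffding := measureReal_abs_average_sub_ge_le hd_indep hd_meas hd_mem hd_mean hε.le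
  have hexponent : -(2 * m' * ε ^ 2) / (2 * α - 0) ^ 2 = -(ε ^ 2 * m') / (2 * α ^ 2) := by
    field_simp
    ring
  rw [Fintype.card_fin, hexponent] at hhoeffding
  refine (ENNReal.le_ofReal_iff_toReal_le (measure_ne_top _ _) (by positivity)).mpr ?_
  rw [← measureReal_def]
  convert hhoeffding using 6
  ring

/-- Pointwise (fixed-matrix) concentration bound (equation (30) in the paper):
for a fixed matrix `X` with entries bounded by `α`, the averaged dithered one-bit
distortion concentrates around `α - ‖X‖_F²/(α n₁ n₂)`. -/
theorem pointwise_concentration (n₁ n₂ m' : ℕ) (hn₁ : 0 < n₁) (hn₂ : 0 < n₂)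
    (hm' : 0 < m') (α ε : ℝ) (hα : 0 < α) (hε : 0 < ε)
    (X : Matrix (Fin n₁) (Fin n₂) ℝ) (hX : ∀ i j, |X i j| ≤ α)
    {Ω : Type*} [MeasureSpace Ω] [IsProbabilityMeasure (ℙ : Measure Ω)]
    (idx : Fin m' → Ω → Fin n₁ × Fin n₂) (τ : Fin m' → Ω → ℝ)
    (hidxmeas : ∀ k, Measurable (idx k)) (hτmeas : ∀ k, Measurable (τ k))
    -- each index pair is uniform on {1,…,n₁}×{1,…,n₂}
    (hidxunif : ∀ k p, ℙ (idx k ⁻¹' {p}) = ((n₁ * n₂ : ENNReal))⁻¹)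
    -- each dither is uniform on [-α, α]
    (hτunif : ∀ k, Measure.map (τ k) ℙ =
      ENNReal.ofReal (1 / (2 * α)) • (volume.restrict (Set.Icc (-α) α)))
    -- all 2m' random variables are mutually independent
    (hindep : iIndepFun
      (β := fun s : Fin m' ⊕ Fin m' => Sum.elim (fun _ => Fin n₁ × Fin n₂) (fun _ => ℝ) s)
      (m := fun s => Sum.casesOn s (fun _ => (inferInstance : MeasurableSpace (Fin n₁ × Fin n₂)))
        (fun _ => (inferInstance : MeasurableSpace ℝ)))
      (fun s => Sum.casesOn s idx τ) ℙ) :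
    ℙ {ω | ε ≤ |(1 / (m' : ℝ)) * (∑ k : Fin m',
        |X (idx k ω).1 (idx k ω).2 - α * sgn (X (idx k ω).1 (idx k ω).2 - τ k ω)|)
        - α + frobR X ^ 2 / (α * n₁ * n₂)|}
      ≤ ENNReal.ofReal (2 * Real.exp (-(ε ^ 2 * m') / (2 * α ^ 2))) :=
  pointwise_concentration_general n₁ n₂ m' hm' α ε hα hε X hX idx τ hidxmeas hτmeas hidxunif hτunif
    hindep
end
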